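/- Let B be a maximal computably enumerable set and let X, Y be disjoint computably enumerable sets with X ∪ Y = B such that neither X nor Y is computable. Then both X and Y are semilow_{1.5}. -/

import Mathlib

open Nat.Partrec (Code)

/-- `Wset e` is the `e`-th computably enumerable set: the domain of the `e`-th
partial computable function in the standard enumeration. -/
def Wset (e : ℕ) : Set ℕ := {x | ((Denumerable.ofNat Code e).eval x).Dom}

/-- A set is computably enumerable iff it occurs in the standard enumeration. -/
def CEset (A : Set ℕ) : Prop := ∃ e, Wset e = A

/-- A c.e. set `B` is maximal if its complement is infinite and for every c.e. set `W`,
either `W ∩ Bᶜ` is finite or `Bᶜ \ W` is finite. -/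
def MaximalCE (B : Set ℕ) : Prop :=
  CEset B ∧ Bᶜ.Infinite ∧ ∀ W : Set ℕ, CEset W → (W ∩ Bᶜ).Finite ∨ (Bᶜ \ W).Finite

/-- `A` is semilow_{1.5} if `{e : W e ∩ Aᶜ infinite}` is one-one reducible to
`Inf = {e : W e infinite}`. -/
def Semilow15 (A : Set ℕ) : Prop :=
  OneOneReducible (fun e => (Wset e ∩ Aᶜ).Infinite) (fun e => (Wset e).Infinite)

/-! Write `B = X ⊔ Y`, so that `W ∩ Xᶜ = (W ∩ Y) ∪ (W ∩ Bᶜ)` for every c.e. set `W`. If `W ∩ Y`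
were finite while `W ∩ Bᶜ` is infinite, maximality would make `Bᶜ \ W` finite, and then `Yᶜ` would
differ only finitely from the c.e. set `X ∪ W`; by Post's theorem `Y` would be computable. Hence
`W_e ∩ Xᶜ` is infinite iff `W_e ∩ Y` is, and `e ↦ W_e ∩ Y` is realised by an injective computable
map on indices (run the `e`-th program and a program for `Y` side by side). -/

namespace REPred

variable {α : Type*} [Primcodable α] {p q : α → Prop}

protected lemma or (hp : REPred p) (hq : REPred q) : REPred fun a => p a ∨ q a := by
  obtain ⟨k, hk, H⟩ := Partrec.merge' hp hq
  refine hk.dom_re.of_eq fun a => ?_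
  rw [(H a).2]
  exact or_congr ⟨fun h => h.fst, fun h => ⟨h, trivial⟩⟩ ⟨fun h => h.fst, fun h => ⟨h, trivial⟩⟩

protected lemma and (hp : REPred p) (hq : REPred q) : REPred fun a => p a ∧ q a :=
  have hq₂ : Partrec₂ fun a (_ : Unit) => Part.assert (q a) fun _ => Part.some () :=
    hq.comp Computable.fst
  (hp.bind hq₂).dom_re.of_eq fun _ =>
    ⟨fun ⟨h₁, h₂⟩ => ⟨h₁.fst, h₂.fst⟩, fun ⟨h₁, h₂⟩ => ⟨⟨h₁, trivial⟩, ⟨h₂, trivial⟩⟩⟩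

end REPred

lemma Set.Finite.computablePred {α : Type*} [Primcodable α] {s : Set α} (hs : s.Finite) :
    ComputablePred (· ∈ s) := by
  classical
  obtain ⟨t, rfl⟩ := hs.exists_finset_coe
  exact (Primrec.eq.exists_mem_list.comp (Primrec.const t.toList) Primrec.id).computablePred.of_eq
    (by simp)

lemma REPred.of_finite_ne {α : Type*} [Primcodable α] {p q : α → Prop} (hp : REPred p)
    (hpq : {a | ¬(p a ↔ q a)}.Finite) : REPred q := by
  have hpq' : {a | ¬(p a ↔ q a) ∧ q a}.Finite := hpq.subset fun _ h => h.1
  refine ((hp.and hpq.computablePred.not.to_re).or hpq'.computablePred.to_re).of_eq fun a => ?_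
  change (p a ∧ ¬¬(p a ↔ q a)) ∨ (¬(p a ↔ q a) ∧ q a) ↔ q a
  tauto

lemma CEset.rePred {A : Set ℕ} (hA : CEset A) : REPred (· ∈ A) := by
  obtain ⟨e, rfl⟩ := hA
  exact (Nat.Partrec.Code.eval_part.comp (Computable.const _) Computable.id).dom_re

section Indices

open Nat.Partrec.Code Denumerable Encodable

lemma wset_encode_pair (e i : ℕ) :
    Wset (encode (pair (ofNat Code e) (ofNat Code i))) = Wset e ∩ Wset i := by
  ext x
  simp [Wset, eval, Seq.seq]

lemma oneOneReducible_infinite_inter {Y : Set ℕ} (hY : CEset Y) :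
    OneOneReducible (fun e => (Wset e ∩ Y).Infinite) (fun e => (Wset e).Infinite) := by
  obtain ⟨i, rfl⟩ := hY
  refine ⟨fun e => encode (pair (ofNat Code e) (ofNat Code i)), ?_, fun a b h => ?_,
    fun e => iff_of_eq (congrArg _ (wset_encode_pair e i).symm)⟩
  · exact (Primrec.encode.comp (primrec₂_pair.comp (Primrec.ofNat Code) (Primrec.const _))).to_comp
  · exact (eqv Code).symm.injective (pair.inj (encode_injective h)).1

end Indices

lemma computablePred_of_finite_inter_of_finite_diff {X Y W : Set ℕ} (hX : CEset X)
    (hY : CEset Y) (hW : CEset W) (hXY : Disjoint X Y) (hWY : (W ∩ Y).Finite)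
    (hWXY : ((X ∪ Y)ᶜ \ W).Finite) : ComputablePred (· ∈ Y) := by
  refine ComputablePred.computable_iff_re_compl_re'.2
    ⟨hY.rePred, (hX.rePred.or hW.rePred).of_finite_ne ((hWY.union hWXY).subset fun x hx => ?_)⟩
  have hxXY : x ∈ X → x ∉ Y := fun h => Set.disjoint_left.1 hXY h
  simp only [Set.mem_ofPred_eq, Set.mem_union, Set.mem_inter_iff, Set.mem_sdiff,
    Set.mem_compl_iff] at hx ⊢
  tauto

lemma infinite_inter_compl_iff_of_maximalCE {X Y W : Set ℕ} (hB : MaximalCE (X ∪ Y))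
    (hX : CEset X) (hY : CEset Y) (hXY : Disjoint X Y) (hYnc : ¬ ComputablePred (· ∈ Y))
    (hW : CEset W) : (W ∩ Xᶜ).Infinite ↔ (W ∩ Y).Infinite := by
  refine ⟨fun hinf => ?_, fun h => h.mono (Set.inter_subset_inter_right _ hXY.subset_compl_left)⟩
  by_contra hWY
  rw [Set.not_infinite] at hWY
  have hXc : Xᶜ = Y ∪ (X ∪ Y)ᶜ := by
    ext x
    have hxXY : x ∈ X → x ∉ Y := fun h => Set.disjoint_left.1 hXY h
    simp only [Set.mem_compl_iff, Set.mem_union]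
    tauto
  rw [hXc, Set.inter_union_distrib_left, Set.infinite_union] at hinf
  rcases hB.2.2 W hW with hfin | hcofin
  · exact hinf.elim (· hWY) (· hfin)
  · exact hYnc (computablePred_of_finite_inter_of_finite_diff hX hY hW hXY hWY hcofin)

lemma semilow15_of_maximalCE_union {X Y : Set ℕ} (hB : MaximalCE (X ∪ Y)) (hX : CEset X)
    (hY : CEset Y) (hXY : Disjoint X Y) (hYnc : ¬ ComputablePred (· ∈ Y)) : Semilow15 X := by
  have h : (fun e => (Wset e ∩ Xᶜ).Infinite) = fun e => (Wset e ∩ Y).Infinite :=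
    funext fun e => propext (infinite_inter_compl_iff_of_maximalCE hB hX hY hXY hYnc ⟨e, rfl⟩)
  unfold Semilow15
  rw [h]
  exact oneOneReducible_infinite_inter hY

/-- If `B` is a maximal c.e. set split into disjoint c.e. sets `X`, `Y`, neither of which
is computable, then both `X` and `Y` are semilow_{1.5}. -/
theorem maximal_split_semilow15
    (B X Y : Set ℕ) (hB : MaximalCE B) (hX : CEset X) (hY : CEset Y)
    (hdisj : Disjoint X Y) (hunion : X ∪ Y = B)
    (hXnc : ¬ ComputablePred (· ∈ X)) (hYnc : ¬ ComputablePred (· ∈ Y)) :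
    Semilow15 X ∧ Semilow15 Y := by
  subst hunion
  exact ⟨semilow15_of_maximalCE_union hB hX hY hdisj hYnc,
    semilow15_of_maximalCE_union (Set.union_comm X Y ▸ hB) hY hX hdisj.symm hXnc⟩
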